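/- Let a ≥ 0 be a real number. Then for every real x with a-1 ≤ x ≤ a+1, it holds that log h(x) = log h(a) + ∑_{k=1}^{∞} ((-1)^{k-1}/k) · (∑_{n=2}^{∞} u_n/(n+a)^k) · (x-a)^k, where the inner series ∑_{n=2}^{∞} u_n/(n+a)^k converges (as a limit of partial sums) for each k ≥ 1 and the outer series converges. -/

import Mathlib

open Filter Finset Topology

/-- The Thue–Morse sequence with values `±1`: `u n = (-1)^(s₂ n)` where `s₂ n`
is the sum of the binary digits of `n`. -/
def u (n : ℕ) : ℤ := (-1) ^ (Nat.digits 2 n).sum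

/-!
Taking logarithms, `log h(y) = ∑_{n ≥ 1} u_n (log (2n+y) - log (2n+1+y))`, and since
`u_{2n} = u_n`, `u_{2n+1} = -u_n`, this is `∑_{m ≥ 2} u_m log (m+y)` summed in consecutive
pairs. With `t = x - a`, the difference `log h(x) - log h(a)` is the pair series of
`u_m log (1 + t/(m+a))`. Expanding each logarithm in powers of `t/(m+a)` (note `|t| ≤ 1 < m + a`)
gives a double series whose `(n, k)` term is `O(2^{-k} n^{-2})`, since the paired difference
`1/p^j - 1/(p+1)^j` is at most `j/p^{j+1}`. Summing it over `n` first produces the coefficients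
`S k` in paired form, and the paired and plain partial sums of `S k` have the same limit because
the terms tend to zero.
-/

lemma u_two_mul (n : ℕ) : u (2 * n) = u n := by
  rcases Nat.eq_zero_or_pos n with rfl | hn
  · rfl
  · rw [u, Nat.digits_def' (by norm_num) (by omega)]
    simp [u, Nat.mul_mod_right, Nat.mul_div_cancel_left n two_pos]

lemma u_two_mul_add_one (n : ℕ) : u (2 * n + 1) = -u n := by
  rw [u, Nat.digits_def' (by norm_num) (by omega)]
  simp [u, pow_add, show (2 * n + 1) / 2 = n by omega]

lemma abs_u (n : ℕ) : |(u n : ℝ)| = 1 := by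
  simp [u]

lemma sum_Icc_one_eq_sum_range {M : Type*} [AddCommMonoid M] (f : ℕ → M) (N : ℕ) :
    ∑ n ∈ Icc 1 N, f n = ∑ n ∈ range N, f (n + 1) := by
  rw [range_eq_Ico, sum_Ico_add', zero_add, Finset.Ico_add_one_right_eq_Icc]

lemma sum_Icc_two_two_mul_add_one {M : Type*} [AddCommMonoid M] (f : ℕ → M) (N : ℕ) :
    ∑ m ∈ Icc 2 (2 * N + 1), f m = ∑ n ∈ range N, (f (2 * n + 2) + f (2 * n + 3)) := by
  induction N with
  | zero => simp
  | succ N ih =>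
    rw [show 2 * (N + 1) + 1 = 2 * N + 1 + 1 + 1 by ring, sum_Icc_succ_top (by omega),
      sum_Icc_succ_top (by omega), ih, sum_range_succ, add_assoc]

lemma tendsto_of_tendsto_two_mul_add_one_of_tendsto_two_mul_add_two {α : Type*} {F : ℕ → α}
    {l : Filter α} (h₁ : Tendsto (fun n => F (2 * n + 1)) atTop l)
    (h₂ : Tendsto (fun n => F (2 * n + 2)) atTop l) : Tendsto F atTop l := by
  intro U hU
  obtain ⟨N₁, hN₁⟩ := eventually_atTop.1 (h₁ hU)
  obtain ⟨N₂, hN₂⟩ := eventually_atTop.1 (h₂ hU)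
  refine eventually_atTop.2 ⟨2 * (N₁ + N₂) + 1, fun m hm => ?_⟩
  obtain ⟨n, rfl | rfl⟩ : ∃ n, m = 2 * n + 1 ∨ m = 2 * n + 2 := ⟨(m - 1) / 2, by omega⟩
  exacts [hN₁ n (by omega), hN₂ n (by omega)]

lemma tendsto_sum_Icc_two_of_hasSum_pairs {G : Type*} [AddCommGroup G] [TopologicalSpace G]
    [IsTopologicalAddGroup G] {f : ℕ → G} {s : G}
    (hs : HasSum (fun n => f (2 * n + 2) + f (2 * n + 3)) s) (hf : Tendsto f atTop (𝓝 0)) :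
    Tendsto (fun N => ∑ m ∈ Icc 2 N, f m) atTop (𝓝 s) := by
  have hodd : Tendsto (fun N => ∑ m ∈ Icc 2 (2 * N + 1), f m) atTop (𝓝 s) := by
    simpa only [sum_Icc_two_two_mul_add_one] using hs.tendsto_sum_nat
  refine tendsto_of_tendsto_two_mul_add_one_of_tendsto_two_mul_add_two hodd ?_
  have hlast : Tendsto (fun N => f (2 * N + 2)) atTop (𝓝 0) :=
    hf.comp (tendsto_atTop_mono (fun N => (by omega : N ≤ 2 * N + 2)) tendsto_id)
  refine (add_zero s ▸ hodd.add hlast).congr fun N => ?_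
  rw [sum_Icc_succ_top (by omega : 2 ≤ 2 * N + 1 + 1)]

def thueMorsePair (g : ℕ → ℝ) (n : ℕ) : ℝ := u (n + 1) * (g (2 * n + 2) - g (2 * n + 3))

lemma thueMorsePair_eq (g : ℕ → ℝ) (n : ℕ) :
    thueMorsePair g n = u (2 * n + 2) * g (2 * n + 2) + u (2 * n + 3) * g (2 * n + 3) := by
  rw [thueMorsePair, show 2 * n + 2 = 2 * (n + 1) by ring, show 2 * n + 3 = 2 * (n + 1) + 1 by ring,
    u_two_mul, u_two_mul_add_one]
  push_cast
  ring

lemma thueMorsePair_const_mul (c : ℝ) (g : ℕ → ℝ) (n : ℕ) :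
    thueMorsePair (fun m => c * g m) n = c * thueMorsePair g n := by
  simp only [thueMorsePair]
  ring

lemma HasSum.thueMorsePair {G : ℕ → ℕ → ℝ} {g : ℕ → ℝ} {n : ℕ}
    (h₂ : HasSum (fun k => G k (2 * n + 2)) (g (2 * n + 2)))
    (h₃ : HasSum (fun k => G k (2 * n + 3)) (g (2 * n + 3))) :
    HasSum (fun k => thueMorsePair (G k) n) (thueMorsePair g n) :=
  (h₂.sub h₃).mul_left _

lemma one_div_pow_sub_one_div_pow_le {p q : ℝ} (hp : 0 < p) (hpq : p ≤ q) (j : ℕ) :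
    1 / p ^ j - 1 / q ^ j ≤ j * (q - p) / p ^ (j + 1) := by
  obtain _ | j := j
  · simp
  have hq : 0 < q := hp.trans_le hpq
  have hmv : q ^ (j + 1) - p ^ (j + 1) ≤ (q - p) * (j + 1) * q ^ j := by
    refine (le_abs_self _).trans ?_
    simpa [abs_of_pos hp, abs_of_pos hq, abs_of_nonneg (sub_nonneg.2 hpq), max_eq_left hpq] using
      abs_pow_sub_pow_le q p (j + 1)
  rw [div_sub_div _ _ (by positivity) (by positivity),
    div_le_div_iff₀ (by positivity) (by positivity)]
  push_cast
  calc (1 * q ^ (j + 1) - p ^ (j + 1) * 1) * p ^ (j + 1 + 1)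
      ≤ (q - p) * (j + 1) * q ^ j * (p * p ^ (j + 1)) := by
        rw [pow_succ' p (j + 1)]
        gcongr
        linarith
    _ ≤ (q - p) * (j + 1) * q ^ j * (q * p ^ (j + 1)) := by
        gcongr
    _ = (j + 1) * (q - p) * (p ^ (j + 1) * q ^ (j + 1)) := by ring

lemma summable_one_div_nat_add_one_sq : Summable fun n : ℕ => 1 / ((n : ℝ) + 1) ^ 2 := by
  refine ((Real.summable_one_div_nat_add_rpow 1 2).2 one_lt_two).congr fun n => ?_
  rw [abs_of_nonneg (by positivity), Real.rpow_two]

section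
variable {a : ℝ}

lemma abs_thueMorsePair_one_div_pow_le (ha : 0 ≤ a) (j n : ℕ) :
    |thueMorsePair (fun m => 1 / ((m : ℝ) + a) ^ j) n| ≤ j / (2 * n + 2 + a) ^ (j + 1) := by
  have hp : (0 : ℝ) < 2 * n + 2 + a := by positivity
  have hle : 1 / (2 * n + 3 + a) ^ j ≤ 1 / (2 * (n : ℝ) + 2 + a) ^ j := by
    gcongr; linarith
  rw [thueMorsePair, abs_mul, abs_u, one_mul]
  push_cast
  rw [abs_of_nonneg (sub_nonneg.2 hle)]
  have := one_div_pow_sub_one_div_pow_le hp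
    (by linarith : 2 * (n : ℝ) + 2 + a ≤ 2 * n + 3 + a) j
  rwa [show (2 * (n : ℝ) + 3 + a) - (2 * n + 2 + a) = 1 by ring, mul_one] at this

lemma summable_thueMorsePair_one_div_pow (ha : 0 ≤ a) (j : ℕ) :
    Summable (thueMorsePair fun m => 1 / ((m : ℝ) + a) ^ j) := by
  refine .of_norm_bounded (summable_one_div_nat_add_one_sq.mul_left (j : ℝ)) fun n => ?_
  refine (abs_thueMorsePair_one_div_pow_le ha j n).trans ?_
  obtain _ | j := j
  · simp
  rw [← mul_one_div]
  gcongr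
  calc ((n : ℝ) + 1) ^ 2 ≤ (2 * n + 2 + a) ^ 2 :=
        pow_le_pow_left₀ (by positivity) (by linarith) 2
    _ ≤ (2 * n + 2 + a) ^ (j + 1 + 1) := pow_le_pow_right₀ (by linarith) (by omega)

/-- `∑_{m ≥ 2} u m / (m + a) ^ k`, summed in consecutive pairs `(2n+2, 2n+3)`; pairing makes
the series absolutely convergent also for `k = 1`. -/
noncomputable def thueMorseSeries (a : ℝ) (k : ℕ) : ℝ :=
  ∑' n, thueMorsePair (fun m => 1 / ((m : ℝ) + a) ^ k) n

lemma tendsto_sum_Icc_two_thueMorseSeries (ha : 0 ≤ a) {k : ℕ} (hk : 1 ≤ k) :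
    Tendsto (fun N => ∑ m ∈ Icc 2 N, (u m : ℝ) / ((m : ℝ) + a) ^ k) atTop
      (𝓝 (thueMorseSeries a k)) := by
  refine tendsto_sum_Icc_two_of_hasSum_pairs ?_ ?_
  · refine (summable_thueMorsePair_one_div_pow ha k).hasSum.congr_fun fun n => ?_
    rw [thueMorsePair_eq]
    push_cast
    simp only [mul_one_div]
  · have hpow : Tendsto (fun m : ℕ => ((m : ℝ) + a) ^ k) atTop atTop :=
      (tendsto_pow_atTop (by omega)).comp
        (tendsto_atTop_add_const_right _ a tendsto_natCast_atTop_atTop)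
    refine squeeze_zero_norm (fun m => ?_) hpow.inv_tendsto_atTop
    rw [norm_div, Real.norm_eq_abs, abs_u, norm_pow, Real.norm_of_nonneg (by positivity), one_div]
    exact le_rfl

end

lemma log_prod_eq_sum_thueMorsePair {y : ℝ} (hy : -2 < y) (N : ℕ) :
    Real.log (∏ n ∈ Icc 1 N, ((2 * (n : ℝ) + y) / (2 * (n : ℝ) + 1 + y)) ^ (u n)) =
      ∑ n ∈ range N, thueMorsePair (fun m => Real.log (m + y)) n := by
  have hpos : ∀ n : ℕ, 1 ≤ n → 0 < 2 * (n : ℝ) + y := fun n hn => by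
    have : (1 : ℝ) ≤ n := by exact_mod_cast hn
    linarith
  rw [Real.log_prod fun n hn => zpow_ne_zero _ <|
    div_ne_zero (hpos n (mem_Icc.1 hn).1).ne' (by linarith [hpos n (mem_Icc.1 hn).1]),
    sum_Icc_one_eq_sum_range]
  refine sum_congr rfl fun n _ => ?_
  rw [Real.log_zpow, Real.log_div (hpos (n + 1) (by omega)).ne'
    (by linarith [hpos (n + 1) (by omega)]), thueMorsePair]
  push_cast
  ring_nf

lemma thueMorsePair_log_sub_log {x a : ℝ} (hx : -2 < x) (ha : -2 < a) (n : ℕ) :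
    thueMorsePair (fun m => Real.log (m + x)) n - thueMorsePair (fun m => Real.log (m + a)) n =
      thueMorsePair (fun m => Real.log (1 + (x - a) / (m + a))) n := by
  have hlog : ∀ m : ℕ, 2 ≤ m → Real.log (m + x) - Real.log (m + a) =
      Real.log (1 + (x - a) / (m + a)) := fun m hm => by
    have hm' : (2 : ℝ) ≤ m := by exact_mod_cast hm
    have hma : (m : ℝ) + a ≠ 0 := by linarith
    rw [← Real.log_div (by linarith) hma]
    congr 1
    field_simp
    ring
  simp only [thueMorsePair]
  rw [← hlog _ (by omega), ← hlog _ (by omega)]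
  ring

lemma Real.hasSum_log_one_add_of_abs_lt_one {s : ℝ} (hs : |s| < 1) :
    HasSum (fun k : ℕ => (-1) ^ k / (k + 1) * s ^ (k + 1)) (Real.log (1 + s)) := by
  have h := (Real.hasSum_pow_div_log_of_abs_lt_one (x := -s) (by rwa [abs_neg])).neg
  rw [neg_neg, sub_neg_eq_add] at h
  refine h.congr_fun fun k => ?_
  rw [neg_pow, pow_succ]
  ring

section
variable {a t : ℝ}

noncomputable def logPairTerm (a t : ℝ) (n k : ℕ) : ℝ :=
  (-1) ^ k / (k + 1) * t ^ (k + 1) * thueMorsePair (fun m => 1 / ((m : ℝ) + a) ^ (k + 1)) n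

lemma abs_logPairTerm_le (ha : 0 ≤ a) (ht : |t| ≤ 1) (n k : ℕ) :
    |logPairTerm a t n k| ≤ (1 / 2) ^ k * (1 / ((n : ℝ) + 1) ^ 2) := by
  have hp : (2 : ℝ) ≤ 2 * n + 2 + a := by linarith [n.cast_nonneg (α := ℝ)]
  have hpair := abs_thueMorsePair_one_div_pow_le ha (k + 1) n
  push_cast at hpair
  rw [logPairTerm, abs_mul, abs_mul, abs_div, abs_pow, abs_neg, abs_one, one_pow,
    abs_of_pos (by positivity : (0 : ℝ) < k + 1), abs_pow]
  calc 1 / ((k : ℝ) + 1) * |t| ^ (k + 1) *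
        |thueMorsePair (fun m => 1 / ((m : ℝ) + a) ^ (k + 1)) n|
      ≤ 1 / ((k : ℝ) + 1) * 1 * ((k + 1) / (2 * n + 2 + a) ^ (k + 1 + 1)) := by
        gcongr
        exact pow_le_one₀ (abs_nonneg t) ht
    _ = 1 / (2 * n + 2 + a) ^ (k + 2) := by
        field_simp
    _ = (1 / (2 * n + 2 + a)) ^ k * (1 / (2 * n + 2 + a) ^ 2) := by
        rw [div_pow, one_pow, div_mul_div_comm, one_mul, ← pow_add]
    _ ≤ (1 / 2) ^ k * (1 / ((n : ℝ) + 1) ^ 2) := by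
        gcongr (1 / ?_) ^ k * (1 / ?_ ^ 2)
        linarith

lemma summable_logPairTerm (ha : 0 ≤ a) (ht : |t| ≤ 1) :
    Summable (Function.uncurry (logPairTerm a t)) := by
  have hprod := summable_geometric_two.mul_of_nonneg summable_one_div_nat_add_one_sq
    (fun _ => by positivity) (fun _ => by positivity)
  exact .of_norm_bounded hprod.prod_symm fun p => abs_logPairTerm_le ha ht p.1 p.2

lemma hasSum_logPairTerm_left (ha : 0 ≤ a) (ht : |t| ≤ 1) (n : ℕ) :
    HasSum (logPairTerm a t n) (thueMorsePair (fun m => Real.log (1 + t / (m + a))) n) := by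
  have hlog : ∀ m : ℕ, 2 ≤ m →
      HasSum (fun k : ℕ => (-1) ^ k / (k + 1) * (t / (m + a)) ^ (k + 1))
        (Real.log (1 + t / (m + a))) := fun m hm => by
    have hm' : (2 : ℝ) ≤ m := by exact_mod_cast hm
    refine Real.hasSum_log_one_add_of_abs_lt_one ?_
    have hma : (0 : ℝ) < m + a := by linarith
    rw [abs_div, abs_of_pos hma, div_lt_one hma]
    linarith
  refine (HasSum.thueMorsePair
    (G := fun k m => (-1) ^ k / (k + 1) * (t / ((m : ℝ) + a)) ^ (k + 1))
    (hlog _ (by omega)) (hlog _ (by omega))).congr_fun fun k => ?_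
  have hterm : (fun m : ℕ => (-1) ^ k / (k + 1) * (t / (m + a)) ^ (k + 1)) =
      fun m : ℕ => (-1) ^ k / (k + 1) * t ^ (k + 1) * (1 / ((m : ℝ) + a) ^ (k + 1)) := by
    funext m
    rw [div_pow]
    ring
  rw [logPairTerm, hterm, thueMorsePair_const_mul]

lemma hasSum_logPairTerm_right (ha : 0 ≤ a) (k : ℕ) :
    HasSum (fun n => logPairTerm a t n k)
      ((-1) ^ k / (k + 1) * thueMorseSeries a (k + 1) * t ^ (k + 1)) := by
  rw [mul_right_comm, thueMorseSeries]
  exact ((summable_thueMorsePair_one_div_pow ha (k + 1)).hasSum.mul_left _).congr_fun fun n => rfl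

lemma hasSum_thueMorseSeries_mul_pow (ha : 0 ≤ a) (ht : |t| ≤ 1) {L : ℝ}
    (hL : Tendsto (fun N => ∑ n ∈ range N,
      thueMorsePair (fun m => Real.log (1 + t / (m + a))) n) atTop (𝓝 L)) :
    HasSum (fun k : ℕ => (-1) ^ k / (k + 1) * thueMorseSeries a (k + 1) * t ^ (k + 1)) L := by
  have hF := summable_logPairTerm ha ht
  have hrows := hF.hasSum.prod_fiberwise fun n => hasSum_logPairTerm_left ha ht n
  have hcols := hF.prod_symm.hasSum.prod_fiberwise fun k => hasSum_logPairTerm_right ha k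
  have hswap : ∑' p : ℕ × ℕ, Function.uncurry (logPairTerm a t) p.swap =
      ∑' p, Function.uncurry (logPairTerm a t) p :=
    (Equiv.prodComm ℕ ℕ).tsum_eq _
  rwa [hswap, tendsto_nhds_unique hrows.tendsto_sum_nat hL] at hcols

end

/-- If `h x` is, for `x > -2`, the (positive) limit of the partial products
`∏_{n=1}^{N} ((2n+x)/(2n+1+x))^{u_n}`, then for every `a ≥ 0` and every
`x ∈ [a-1, a+1]`, the series `S k = ∑_{n=2}^{∞} u_n/(n+a)^k` converges for each
`k ≥ 1`, and `log h(x) = log h(a) + ∑_{k=1}^{∞} ((-1)^{k-1}/k) · S k · (x-a)^k`,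
the outer series converging as well. -/
theorem stmt_13 (h : ℝ → ℝ)
    (hh : ∀ x : ℝ, -2 < x →
      Tendsto (fun N : ℕ => ∏ n ∈ Finset.Icc 1 N,
        ((2 * (n : ℝ) + x) / (2 * (n : ℝ) + 1 + x)) ^ (u n)) atTop (𝓝 (h x)))
    (hpos : ∀ x : ℝ, -2 < x → 0 < h x)
    (a : ℝ) (ha : 0 ≤ a) (x : ℝ) (hx₁ : a - 1 ≤ x) (hx₂ : x ≤ a + 1) :
    ∃ S : ℕ → ℝ,
      (∀ k : ℕ, 1 ≤ k →
        Tendsto (fun N : ℕ => ∑ n ∈ Finset.Icc 2 N,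
          (u n : ℝ) / ((n : ℝ) + a) ^ k) atTop (𝓝 (S k))) ∧
      Tendsto (fun K : ℕ => ∑ k ∈ Finset.Icc 1 K,
        ((-1 : ℝ) ^ (k - 1) / (k : ℝ)) * S k * (x - a) ^ k) atTop
        (𝓝 (Real.log (h x) - Real.log (h a))) := by
  have hlog_h : ∀ y, -2 < y → Tendsto (fun N => ∑ n ∈ range N,
      thueMorsePair (fun m => Real.log (m + y)) n) atTop (𝓝 (Real.log (h y))) := fun y hy =>
    ((hh y hy).log (hpos y hy).ne').congr (log_prod_eq_sum_thueMorsePair hy)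
  have hx : -2 < x := by linarith
  have ha' : -2 < a := by linarith
  have hlog : Tendsto (fun N => ∑ n ∈ range N,
      thueMorsePair (fun m => Real.log (1 + (x - a) / (m + a))) n) atTop
      (𝓝 (Real.log (h x) - Real.log (h a))) := by
    refine ((hlog_h x hx).sub (hlog_h a ha')).congr fun N => ?_
    simp only [← sum_sub_distrib, thueMorsePair_log_sub_log hx ha']
  have hseries := hasSum_thueMorseSeries_mul_pow ha (abs_le.2 ⟨by linarith, by linarith⟩) hlog
  refine ⟨thueMorseSeries a, fun k hk => tendsto_sum_Icc_two_thueMorseSeries ha hk,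
    hseries.tendsto_sum_nat.congr fun K => ?_⟩
  rw [sum_Icc_one_eq_sum_range]
  push_cast
  rfl
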